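/- arXiv:2501.02023 — 3 statements merged into one kernel-verified Lean document; each statement's English description precedes it below -/
import Mathlib

section
/- In a finite T0 topological space, a subset A is locally closed if and only if A is convex with respect to the specialization order (x ≤ y iff x ∈ cl{y}). -/
/-!
Open sets are closed under generalization and closed sets under specialization, so every
locally closed set is convex. Conversely, in a finite space arbitrary intersections of open sets
are open, so the open hull `nhdsKer A` of `A` is open and consists of the generalizations of
points of `A`, while `closure A` consists of their specializations; for convex `A` the two meet
exactly in `A`.
-/

open Set

section

variable {X : Type*} [TopologicalSpace X] {A : Set X}

theorem IsLocallyClosed.mem_of_specializes (hA : IsLocallyClosed A) {x y z : X} (hx : x ∈ A)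
    (hz : z ∈ A) (hyx : y ⤳ x) (hzy : z ⤳ y) : y ∈ A := by
  obtain ⟨U, C, hU, hC, rfl⟩ := hA
  exact ⟨hyx.mem_open hU hx.1, hzy.mem_closed hC hz.2⟩

section AlexandrovDiscrete

variable [AlexandrovDiscrete X]

theorem mem_closure_iff_exists_specializes {y : X} : y ∈ closure A ↔ ∃ z ∈ A, z ⤳ y := by
  conv_lhs => rw [← biUnion_of_singleton A]
  simp only [closure_iUnion, mem_iUnion, specializes_iff_mem_closure, exists_prop]

theorem nhdsKer_inter_closure_eq_self
    (hA : ∀ x ∈ A, ∀ z ∈ A, ∀ y, y ⤳ x → z ⤳ y → y ∈ A) : nhdsKer A ∩ closure A = A := by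
  refine Subset.antisymm ?_ fun a ha ↦ ⟨subset_nhdsKer ha, subset_closure ha⟩
  rintro y ⟨hyU, hyC⟩
  obtain ⟨x, hx, hyx⟩ := mem_nhdsKer_iff_specializes.1 hyU
  obtain ⟨z, hz, hzy⟩ := mem_closure_iff_exists_specializes.1 hyC
  exact hA x hx z hz y hyx hzy

theorem isLocallyClosed_iff_forall_specializes :
    IsLocallyClosed A ↔ ∀ x ∈ A, ∀ z ∈ A, ∀ y, y ⤳ x → z ⤳ y → y ∈ A :=
  ⟨fun hA _ hx _ hz _ ↦ hA.mem_of_specializes hx hz,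
    fun hA ↦ ⟨_, _, isOpen_nhdsKer, isClosed_closure, (nhdsKer_inter_closure_eq_self hA).symm⟩⟩

end AlexandrovDiscrete

end

theorem locallyClosed_iff_convex_general (X : Type*) [TopologicalSpace X] [Finite X]
    (A : Set X) :
    (∃ U C : Set X, IsOpen U ∧ IsClosed C ∧ A = U ∩ C) ↔
      (∀ x ∈ A, ∀ z ∈ A, ∀ y : X,
        x ∈ closure ({y} : Set X) → y ∈ closure ({z} : Set X) → y ∈ A) := by
  have h := isLocallyClosed_iff_forall_specializes (A := A)
  simp only [specializes_iff_mem_closure] at h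
  exact h

/-- In a finite `T0` space, `A` is locally closed iff `A` is convex for the
specialization order `x ≤ y ↔ x ∈ cl {y}`. -/
theorem locallyClosed_iff_convex (X : Type*) [TopologicalSpace X] [Finite X] [T0Space X]
    (A : Set X) :
    (∃ U C : Set X, IsOpen U ∧ IsClosed C ∧ A = U ∩ C) ↔
      (∀ x ∈ A, ∀ z ∈ A, ∀ y : X,
        x ∈ closure ({y} : Set X) → y ∈ closure ({z} : Set X) → y ∈ A) :=
  locallyClosed_iff_convex_general X A
end

section
/- Let K be a finite simplicial complex, V a subset of simplices of K that is convex with respect to the face relation, and τ a maximal simplex of V. Define V₂ = {σ ∈ V : τ is the unique maximal element of V above σ} and V₁ = V \ V₂. Then both V₁ and V₂ are convex with respect to the face relation. -/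
/-! Among the elements of a finite set `V`, those whose only maximal element above them is
`τ` form an up-closed subset of `V`: every maximal element of `V` above a larger element is also
above the smaller one, and such a maximal element exists by finiteness. An up-closed subset of a
convex set is convex, and so is its complement, which is down-closed. -/

section

variable {P : Type*} [PartialOrder P]

def RelConvex (K V : Set P) : Prop :=
  ∀ x ∈ V, ∀ z ∈ V, ∀ y ∈ K, x ≤ y → y ≤ z → y ∈ V

/-- The set `V₂` of the statement. -/
def maximalBasin (V : Set P) (τ : P) : Set P :=
  {σ ∈ V | σ ≤ τ ∧ ∀ ρ, Maximal (· ∈ V) ρ → σ ≤ ρ → ρ = τ}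

namespace RelConvex

variable {K V W : Set P}

theorem of_upClosed (hV : RelConvex K V) (hWV : W ⊆ V)
    (hW : ∀ y ∈ W, ∀ z ∈ V, y ≤ z → z ∈ W) : RelConvex K W :=
  fun x hx z hz y hy hxy hyz => hW x hx y (hV x (hWV hx) z (hWV hz) y hy hxy hyz) hxy

theorem diff_of_upClosed (hV : RelConvex K V) (hW : ∀ y ∈ W, ∀ z ∈ V, y ≤ z → z ∈ W) :
    RelConvex K (V \ W) :=
  fun x hx z hz y hy hxy hyz =>
    ⟨hV x hx.1 z hz.1 y hy hxy hyz, fun hyW => hz.2 (hW y hyW z hz.1 hyz)⟩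

end RelConvex

theorem maximalBasin_upClosed {V : Set P} {τ : P} (hV : V.Finite) :
    ∀ y ∈ maximalBasin V τ, ∀ z ∈ V, y ≤ z → z ∈ maximalBasin V τ := by
  rintro y ⟨-, -, hy⟩ z hz hyz
  obtain ⟨m, hzm, hm⟩ := hV.exists_le_maximal hz
  have hmτ : m = τ := hy m hm (hyz.trans hzm)
  exact ⟨hz, hmτ ▸ hzm, fun ρ hρ hzρ => hy ρ hρ (hyz.trans hzρ)⟩

end

theorem split_convex_at_maximal_general {α : Type*} (K : Set (Finset α)) (hKfin : K.Finite)
    (V : Set (Finset α)) (hVK : V ⊆ K)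
    (hVconv : ∀ x ∈ V, ∀ z ∈ V, ∀ y ∈ K, x ⊆ y → y ⊆ z → y ∈ V)
    (τ : Finset α)
    (V₂ : Set (Finset α))
    (hV₂ : V₂ = {σ ∈ V | σ ⊆ τ ∧
      ∀ ρ ∈ V, σ ⊆ ρ → (∀ ρ' ∈ V, ρ ⊆ ρ' → ρ' = ρ) → ρ = τ})
    (V₁ : Set (Finset α)) (hV₁ : V₁ = V \ V₂) :
    (∀ x ∈ V₁, ∀ z ∈ V₁, ∀ y ∈ K, x ⊆ y → y ⊆ z → y ∈ V₁) ∧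
    (∀ x ∈ V₂, ∀ z ∈ V₂, ∀ y ∈ K, x ⊆ y → y ⊆ z → y ∈ V₂) := by
  have hV₂basin : V₂ = maximalBasin V τ := by
    subst hV₂
    ext σ
    simp only [maximalBasin, Set.mem_ofPred_eq, maximal_iff]
    grind
  have hVconv : RelConvex K V := hVconv
  have hup := maximalBasin_upClosed (τ := τ) (hKfin.subset hVK)
  subst hV₁
  rw [hV₂basin]
  exact ⟨hVconv.diff_of_upClosed hup, hVconv.of_upClosed (fun _ h => h.1) hup⟩

/-- Splitting a convex set `V` of simplices at a maximal simplex `τ`: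
`V₂` consists of those `σ ∈ V` whose unique maximal element of `V` above them is `τ`,
and `V₁ = V \ V₂`. Both are convex with respect to the face relation. -/
theorem split_convex_at_maximal {α : Type*} (K : Set (Finset α)) (hKfin : K.Finite)
    (hK : ∀ σ ∈ K, σ.Nonempty ∧ ∀ ρ : Finset α, ρ ⊆ σ → ρ.Nonempty → ρ ∈ K)
    (V : Set (Finset α)) (hVK : V ⊆ K)
    (hVconv : ∀ x ∈ V, ∀ z ∈ V, ∀ y ∈ K, x ⊆ y → y ⊆ z → y ∈ V)
    (τ : Finset α) (hτ : τ ∈ V) (hτmax : ∀ ρ ∈ V, τ ⊆ ρ → ρ = τ)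
    (V₂ : Set (Finset α))
    (hV₂ : V₂ = {σ ∈ V | σ ⊆ τ ∧
      ∀ ρ ∈ V, σ ⊆ ρ → (∀ ρ' ∈ V, ρ ⊆ ρ' → ρ' = ρ) → ρ = τ})
    (V₁ : Set (Finset α)) (hV₁ : V₁ = V \ V₂) :
    (∀ x ∈ V₁, ∀ z ∈ V₁, ∀ y ∈ K, x ⊆ y → y ⊆ z → y ∈ V₁) ∧
    (∀ x ∈ V₂, ∀ z ∈ V₂, ∀ y ∈ K, x ⊆ y → y ⊆ z → y ∈ V₂) :=
  split_convex_at_maximal_general K hKfin V hVK hVconv τ V₂ hV₂ V₁ hV₁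
end

section
/- Let K be a finite simplicial complex with toplex set T. Suppose z assigns to every pair (σ, τ) with σ a proper face of a toplex τ a value in {0,1} such that (i) for every σ ∈ K \ T, exactly one toplex τ > σ satisfies z(σ,τ) = 1, and (ii) for every triple σᵢ < σⱼ < τ with dim σⱼ = dim σᵢ + 1 and τ ∈ T, z(σᵢ,τ) ≤ z(σⱼ,τ). Then the sets V_τ = {σ < τ : z(σ,τ)=1} ∪ {τ}, for τ ∈ T, form a partition of K into convex sets (i.e., a combinatorial multivector field). -/
/-- Any feasible solution of the one-toplex-per-multivector optimization problem induces
a combinatorial multivector field: the sets `V_τ = {σ ⊂ τ | z σ τ} ∪ {τ}`, for toplexes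
`τ`, partition `K` into convex sets. -/
theorem solution_induces_multivector_field {α : Type*} (K : Set (Finset α))
    (hKfin : K.Finite)
    (hK : ∀ σ ∈ K, σ.Nonempty ∧ ∀ ρ : Finset α, ρ ⊆ σ → ρ.Nonempty → ρ ∈ K)
    (T : Set (Finset α)) (hT : T = {τ ∈ K | ∀ ρ ∈ K, τ ⊆ ρ → ρ = τ})
    (z : Finset α → Finset α → Bool)
    (h1 : ∀ σ ∈ K, σ ∉ T → ∃! τ, τ ∈ T ∧ σ ⊂ τ ∧ z σ τ = true)
    (h2 : ∀ σi ∈ K, ∀ σj ∈ K, ∀ τ ∈ T, σi ⊂ σj → σj ⊂ τ →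
      σj.card = σi.card + 1 → z σi τ = true → z σj τ = true)
    (V : Finset α → Set (Finset α))
    (hV : ∀ τ, V τ = {σ ∈ K | σ ⊂ τ ∧ z σ τ = true} ∪ {τ}) :
    (∀ τ₁ ∈ T, ∀ τ₂ ∈ T, τ₁ ≠ τ₂ → V τ₁ ∩ V τ₂ = ∅) ∧
    (⋃ τ ∈ T, V τ) = K ∧
    (∀ τ ∈ T, ∀ x ∈ V τ, ∀ w ∈ V τ, ∀ y ∈ K, x ⊆ y → y ⊆ w → y ∈ V τ) := by
  classical
  have hTK : ∀ τ ∈ T, τ ∈ K := by intro τ hτ; rw [hT] at hτ; exact hτ.1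
  have hTmax : ∀ τ ∈ T, ∀ ρ ∈ K, τ ⊆ ρ → ρ = τ := by
    intro τ hτ; rw [hT] at hτ; exact hτ.2
  -- proper faces of toplexes are not toplexes
  have hnotT : ∀ σ ∈ K, ∀ τ ∈ T, σ ⊂ τ → σ ∉ T := by
    intro σ hσ τ hτ hσt hσT
    exact hσt.ne (hTmax σ hσT τ (hTK τ hτ) hσt.subset).symm
  -- key monotonicity lemma
  have key : ∀ n : ℕ, ∀ x y : Finset α, x ∈ K → y ∈ K → x ⊆ y → ∀ τ ∈ T, y ⊂ τ →
      z x τ = true → y.card = x.card + n → z y τ = true := by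
    intro n
    induction n with
    | zero =>
      intro x y hx hy hxy τ hτ hyτ hz hcard
      have : x = y := Finset.eq_of_subset_of_card_le hxy (by omega)
      rwa [← this]
    | succ n ih =>
      intro x y hx hy hxy τ hτ hyτ hz hcard
      have hne : ∃ a ∈ y, a ∉ x := by
        by_contra h
        push_neg at h
        have : y ⊆ x := h
        have := Finset.card_le_card this
        omega
      obtain ⟨a, hay, hax⟩ := hne
      have hxy' : x ⊆ y.erase a := fun b hb =>
        Finset.mem_erase.mpr ⟨fun he => hax (he ▸ hb), hxy hb⟩
      have hcy : (y.erase a).card = x.card + n := by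
        rw [Finset.card_erase_of_mem hay]; omega
      have hxne := (hK x hx).1
      have hy'ne : (y.erase a).Nonempty := hxne.mono hxy'
      have hy'K : y.erase a ∈ K := (hK y hy).2 _ (Finset.erase_subset _ _) hy'ne
      have hy'y : y.erase a ⊂ y := Finset.erase_ssubset hay
      have hz' := ih x (y.erase a) hx hy'K hxy' τ hτ (hy'y.trans hyτ) hz hcy
      exact h2 _ hy'K y hy τ hτ hy'y hyτ (by omega) hz'
  refine ⟨?_, ?_, ?_⟩
  · -- disjointness
    intro τ₁ hτ₁ τ₂ hτ₂ hne
    ext x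
    simp only [Set.mem_inter_iff, Set.mem_empty_iff_false, iff_false]
    rintro ⟨hx1, hx2⟩
    rw [hV] at hx1 hx2
    rcases hx1 with h1' | h1' <;> rcases hx2 with h2' | h2'
    · obtain ⟨hxK, hxt1, hz1⟩ := h1'
      obtain ⟨_, hxt2, hz2⟩ := h2'
      have hxnT : x ∉ T := hnotT x hxK τ₁ hτ₁ hxt1
      obtain ⟨τ, -, huniq⟩ := h1 x hxK hxnT
      exact hne ((huniq τ₁ ⟨hτ₁, hxt1, hz1⟩).trans (huniq τ₂ ⟨hτ₂, hxt2, hz2⟩).symm)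
    · simp only [Set.mem_singleton_iff] at h2'
      subst h2'
      exact (hnotT x h1'.1 τ₁ hτ₁ h1'.2.1) hτ₂
    · simp only [Set.mem_singleton_iff] at h1'
      subst h1'
      exact (hnotT x h2'.1 τ₂ hτ₂ h2'.2.1) hτ₁
    · simp only [Set.mem_singleton_iff] at h1' h2'
      exact hne (h1' ▸ h2' ▸ rfl)
  · -- union
    ext σ
    simp only [Set.mem_iUnion]
    constructor
    · rintro ⟨τ, hτ, hσ⟩
      rw [hV] at hσ
      rcases hσ with h | h
      · exact h.1
      · simp only [Set.mem_singleton_iff] at h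
        exact h ▸ hTK τ hτ
    · intro hσ
      by_cases hσT : σ ∈ T
      · exact ⟨σ, hσT, by rw [hV]; right; rfl⟩
      · obtain ⟨τ, ⟨hτ, hστ, hz⟩, -⟩ := h1 σ hσ hσT
        exact ⟨τ, hτ, by rw [hV]; left; exact ⟨hσ, hστ, hz⟩⟩
  · -- convexity
    intro τ hτ x hx w hw y hy hxy hyw
    rw [hV] at hx hw ⊢
    rcases hx with hx | hx
    swap
    · -- x = τ, so τ ⊆ y; and y ⊆ w ⊆ τ in all cases, so y = τ
      simp only [Set.mem_singleton_iff] at hx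
      have hwτ : w ⊆ τ := by
        rcases hw with hw | hw
        · exact hw.2.1.subset
        · simp only [Set.mem_singleton_iff] at hw; exact hw.le
      right
      exact Finset.Subset.antisymm (hyw.trans hwτ) (hx ▸ hxy)
    · obtain ⟨hxK, hxτ, hzx⟩ := hx
      by_cases hyτ : y = τ
      · right; exact hyτ
      · have hyssτ : y ⊂ τ := by
          rcases hw with hw | hw
          · exact lt_of_le_of_lt hyw hw.2.1
          · simp only [Set.mem_singleton_iff] at hw
            subst hw
            exact lt_of_le_of_ne hyw hyτ
        left
        have hc : y.card = x.card + (y.card - x.card) := by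
          have := Finset.card_le_card hxy; omega
        exact ⟨hy, hyssτ, key _ x y hxK hy hxy τ hτ hyssτ hzx hc⟩
end
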